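/- Let n ≥ 2 and 1 ≤ k ≤ n−1. Let U = (U_1,…,U_{n−k}) and V = (V_1,…,V_{n−k}) be vectors of positive reals. Then there exists a unique pair of real vectors V' = (V'_1,…,V'_{n−k−1}) and U' = (U'_1,…,U'_{n−k}) such that F_k(U)F_k(V) = F_{k+1}(V')F_k(U') as n×n real matrices; moreover all entries of U' and V' are positive. -/
import Mathlib


/-- Extend a vector `V : Fin m → ℝ` to `ℕ → ℝ` by zero. -/
def padded {m : ℕ} (V : Fin m → ℝ) : ℕ → ℝ :=
  fun t => if h : t < m then V ⟨t, h⟩ else 0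

/-- The matrix E(I): diagonal entries I_i, entries 1 on the superdiagonal. -/
def Ematrix (n : ℕ) (I : Fin n → ℝ) : Matrix (Fin n) (Fin n) ℝ :=
  Matrix.of fun r c =>
    if (c : ℕ) = (r : ℕ) then I r else if (c : ℕ) = (r : ℕ) + 1 then 1 else 0

/-- The matrix F_k(V) (1-indexed description: F_k(V)_{ii} = 1,
F_k(V)_{i+1,i} = −V_{i−k+1} for k ≤ i ≤ n−1, other entries 0). -/
def Fkmatrix (n k : ℕ) (V : Fin (n - k) → ℝ) : Matrix (Fin n) (Fin n) ℝ :=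
  Matrix.of fun r c =>
    if (r : ℕ) = (c : ℕ) then 1
    else if (r : ℕ) = (c : ℕ) + 1 ∧ k ≤ (c : ℕ) + 1 then -(padded V ((c : ℕ) + 1 - k))
    else 0

/-! ### Auxiliary matrix lemmas -/

/-- Subdiagonal matrix: entry `a c` at `(c+1, c)`. -/
def Smat (n : ℕ) (a : ℕ → ℝ) : Matrix (Fin n) (Fin n) ℝ :=
  Matrix.of fun r c => if (r : ℕ) = (c : ℕ) + 1 then a (c : ℕ) else 0

/-- Lower bidiagonal matrix with unit diagonal. -/
def Lmat (n : ℕ) (a : ℕ → ℝ) : Matrix (Fin n) (Fin n) ℝ := 1 + Smat n a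

lemma Smat_mul_Smat (n : ℕ) (a b : ℕ → ℝ) :
    Smat n a * Smat n b =
      Matrix.of fun (r c : Fin n) =>
        if (r : ℕ) = (c : ℕ) + 2 then a ((c : ℕ) + 1) * b (c : ℕ) else 0 := by
  ext r c
  simp only [Matrix.mul_apply, Smat, Matrix.of_apply]
  by_cases hc : (c : ℕ) + 1 < n
  · rw [Finset.sum_eq_single (⟨(c : ℕ) + 1, hc⟩ : Fin n)]
    · simp only [Fin.val_mk]
      rw [if_true]
      by_cases hr : (r : ℕ) = (c : ℕ) + 2
      · rw [if_pos (show (r : ℕ) = (c : ℕ) + 1 + 1 from hr), if_pos hr]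
      · rw [if_neg (show ¬(r : ℕ) = (c : ℕ) + 1 + 1 from hr), if_neg hr, zero_mul]
    · intro m _ hm
      rw [if_neg (fun h : (m : ℕ) = (c : ℕ) + 1 => hm (by ext; simpa using h)), mul_zero]
    · intro h; exact absurd (Finset.mem_univ _) h
  · have hrn := r.isLt
    rw [Finset.sum_eq_zero, if_neg (by omega)]
    intro m _
    rw [if_neg (show ¬(m : ℕ) = (c : ℕ) + 1 from by have := m.isLt; omega), mul_zero]

lemma Lmat_mul_apply (n : ℕ) (a b : ℕ → ℝ) (r c : Fin n) :
    (Lmat n a * Lmat n b) r c =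
      (if (r : ℕ) = (c : ℕ) then 1 else 0) +
      (if (r : ℕ) = (c : ℕ) + 1 then a c + b c else 0) +
      (if (r : ℕ) = (c : ℕ) + 2 then a ((c : ℕ) + 1) * b c else 0) := by
  have h : Lmat n a * Lmat n b = 1 + Smat n a + Smat n b + Smat n a * Smat n b := by
    simp only [Lmat]; noncomm_ring
  rw [h, Smat_mul_Smat]
  simp only [Matrix.add_apply, Matrix.one_apply, Matrix.of_apply, Smat, Fin.ext_iff]
  split_ifs <;> first | omega | ring

lemma Lmul_eq_Lmul_iff (n : ℕ) (a b a' b' : ℕ → ℝ) :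
    Lmat n a * Lmat n b = Lmat n a' * Lmat n b' ↔
      ((∀ c : ℕ, c + 1 < n → a c + b c = a' c + b' c) ∧
       (∀ c : ℕ, c + 2 < n → a (c + 1) * b c = a' (c + 1) * b' c)) := by
  constructor
  · intro h
    constructor
    · intro c hc
      have h2 := congrFun (congrFun h ⟨c + 1, hc⟩) ⟨c, by omega⟩
      rw [Lmat_mul_apply, Lmat_mul_apply] at h2
      simp at h2
      linarith
    · intro c hc
      have h2 := congrFun (congrFun h ⟨c + 2, hc⟩) ⟨c, by omega⟩
      rw [Lmat_mul_apply, Lmat_mul_apply] at h2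
      simp at h2
      linarith
  · rintro ⟨h1, h2⟩
    ext r c
    rw [Lmat_mul_apply, Lmat_mul_apply]
    have hr := r.isLt
    split_ifs <;> first | omega | rfl | rw [h1 c (by omega)] | rw [h2 c (by omega)]

lemma Fk_eq_Lmat (n k : ℕ) (V : Fin (n - k) → ℝ) :
    Fkmatrix n k V =
      Lmat n (fun c => if k ≤ c + 1 then -(padded V (c + 1 - k)) else 0) := by
  ext r c
  simp only [Fkmatrix, Lmat, Smat, Matrix.add_apply, Matrix.one_apply, Matrix.of_apply,
    Fin.ext_iff]
  split_ifs <;> first | omega | ring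

/-! ### The exchange sequences -/

noncomputable def useq (pU pV : ℕ → ℝ) : ℕ → ℝ
  | 0 => pU 0 + pV 0
  | j + 1 => pU (j + 1) + pV (j + 1) - pU (j + 1) * pV j / useq pU pV j

noncomputable def vseq (pU pV : ℕ → ℝ) (j : ℕ) : ℝ :=
  pU (j + 1) * pV j / useq pU pV j

lemma useq_zero (pU pV : ℕ → ℝ) : useq pU pV 0 = pU 0 + pV 0 := rfl

lemma useq_succ (pU pV : ℕ → ℝ) (j : ℕ) :
    useq pU pV (j + 1) = pU (j + 1) + pV (j + 1) - vseq pU pV j := rfl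

lemma useq_gt (pU pV : ℕ → ℝ) (m : ℕ) (hU : ∀ j, j < m → 0 < pU j)
    (hV : ∀ j, j < m → 0 < pV j) : ∀ j, j < m → pV j < useq pU pV j := by
  intro j
  induction j with
  | zero =>
    intro h
    rw [useq_zero]
    have := hU 0 h
    linarith
  | succ j ih =>
    intro h
    have hj : j < m := by omega
    have h1 := ih hj
    have hu : 0 < useq pU pV j := lt_trans (hV j hj) h1
    have h2 : pU (j + 1) * pV j / useq pU pV j < pU (j + 1) := by
      rw [div_lt_iff₀ hu]
      nlinarith [hV j hj, hU (j + 1) h]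
    rw [useq_succ, vseq]
    linarith

lemma useq_pos (pU pV : ℕ → ℝ) (m : ℕ) (hU : ∀ j, j < m → 0 < pU j)
    (hV : ∀ j, j < m → 0 < pV j) : ∀ j, j < m → 0 < useq pU pV j :=
  fun j hj => lt_trans (hV j hj) (useq_gt pU pV m hU hV j hj)

lemma vseq_pos (pU pV : ℕ → ℝ) (m : ℕ) (hU : ∀ j, j < m → 0 < pU j)
    (hV : ∀ j, j < m → 0 < pV j) : ∀ j, j + 1 < m → 0 < vseq pU pV j :=
  fun j hj => div_pos (mul_pos (hU (j + 1) hj) (hV j (by omega)))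
    (useq_pos pU pV m hU hV j (by omega))

lemma vseq_mul_useq (pU pV : ℕ → ℝ) (m : ℕ) (hU : ∀ j, j < m → 0 < pU j)
    (hV : ∀ j, j < m → 0 < pV j) (j : ℕ) (hj : j < m) :
    vseq pU pV j * useq pU pV j = pU (j + 1) * pV j :=
  div_mul_cancel₀ _ (ne_of_gt (useq_pos pU pV m hU hV j hj))

lemma padded_coe {m : ℕ} (W : Fin m → ℝ) (i : Fin m) : padded W i = W i :=
  dif_pos i.isLt

/- STATEMENT 8 -/
theorem exists_unique_FkFk_exchange (n k : ℕ) (hn : 2 ≤ n) (hk1 : 1 ≤ k) (hkn : k ≤ n - 1)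
    (U V : Fin (n - k) → ℝ) (hU : ∀ i, 0 < U i) (hV : ∀ i, 0 < V i) :
    ∃ (V' : Fin (n - (k+1)) → ℝ) (U' : Fin (n - k) → ℝ),
      Fkmatrix n k U * Fkmatrix n k V = Fkmatrix n (k+1) V' * Fkmatrix n k U' ∧
      (∀ i, 0 < V' i) ∧ (∀ i, 0 < U' i) ∧
      ∀ (V'' : Fin (n - (k+1)) → ℝ) (U'' : Fin (n - k) → ℝ),
        Fkmatrix n k U * Fkmatrix n k V = Fkmatrix n (k+1) V'' * Fkmatrix n k U'' →
        V'' = V' ∧ U'' = U' := by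
  have hkn' : k < n := by omega
  have hm1 : 1 ≤ n - k := by omega
  set pU : ℕ → ℝ := padded U with hpUdef
  set pV : ℕ → ℝ := padded V with hpVdef
  have hpU : ∀ j, j < n - k → 0 < pU j := by
    intro j hj; rw [hpUdef, padded]; simp only [hj, dif_pos]; exact hU _
  have hpV : ∀ j, j < n - k → 0 < pV j := by
    intro j hj; rw [hpVdef, padded]; simp only [hj, dif_pos]; exact hV _
  refine ⟨fun i => vseq pU pV i, fun i => useq pU pV i, ?_, ?_, ?_, ?_⟩
  · -- the matrix identity
    have hpV' : ∀ (j : ℕ) (hj : j < n - (k+1)),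
        padded (fun i : Fin (n - (k+1)) => vseq pU pV (i : ℕ)) j = vseq pU pV j :=
      fun j hj => dif_pos hj
    have hpU' : ∀ (j : ℕ) (hj : j < n - k),
        padded (fun i : Fin (n - k) => useq pU pV (i : ℕ)) j = useq pU pV j :=
      fun j hj => dif_pos hj
    rw [Fk_eq_Lmat, Fk_eq_Lmat, Fk_eq_Lmat, Fk_eq_Lmat, Lmul_eq_Lmul_iff]
    constructor
    · intro c hc
      by_cases h1 : k ≤ c + 1
      · by_cases h2 : k ≤ c
        · have e1 : c + 1 - k = (c - k) + 1 := by omega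
          have e2 : c + 1 - (k + 1) = c - k := by omega
          simp only [if_pos h1, if_pos (show k + 1 ≤ c + 1 by omega), e1, e2,
            hpV' (c - k) (by omega), hpU' (c - k + 1) (by omega), useq_succ]
          ring
        · have e0 : c + 1 - k = 0 := by omega
          simp only [if_pos h1, if_neg (show ¬ k + 1 ≤ c + 1 by omega), e0,
            hpU' 0 (by omega), useq_zero]
          ring
      · simp only [if_neg h1, if_neg (show ¬ k + 1 ≤ c + 1 by omega)]
    · intro c hc
      by_cases h1 : k ≤ c + 1
      · have e1 : c + 1 + 1 - k = (c + 1 - k) + 1 := by omega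
        have e2 : c + 1 + 1 - (k + 1) = c + 1 - k := by omega
        simp only [if_pos h1, if_pos (show k ≤ c + 1 + 1 by omega),
          if_pos (show k + 1 ≤ c + 1 + 1 by omega), e1, e2,
          hpV' (c + 1 - k) (by omega), hpU' (c + 1 - k) (by omega), neg_mul_neg]
        rw [vseq_mul_useq pU pV (n - k) hpU hpV (c + 1 - k) (by omega)]
      · simp only [if_neg h1, mul_zero]
  · -- positivity of V'
    intro i
    exact vseq_pos pU pV (n - k) hpU hpV i (by have := i.isLt; omega)
  · -- positivity of U'
    intro i
    exact useq_pos pU pV (n - k) hpU hpV i (by have := i.isLt; omega)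
  · -- uniqueness
    intro V'' U'' h
    rw [Fk_eq_Lmat, Fk_eq_Lmat, Fk_eq_Lmat, Fk_eq_Lmat, Lmul_eq_Lmul_iff] at h
    obtain ⟨h1, h2⟩ := h
    have H10 : pU 0 + pV 0 = padded U'' 0 := by
      have h := h1 (k - 1) (by omega)
      simp only [show k - 1 + 1 = k from by omega, show k - k = 0 from by omega,
        if_pos (le_refl k), if_neg (show ¬ k + 1 ≤ k by omega)] at h
      linarith
    have H1 : ∀ j, j + 1 < n - k →
        pU (j + 1) + pV (j + 1) = padded V'' j + padded U'' (j + 1) := by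
      intro j hj
      have h := h1 (k + j) (by omega)
      simp only [show k + j + 1 - k = j + 1 from by omega,
        show k + j + 1 - (k + 1) = j from by omega,
        if_pos (show k ≤ k + j + 1 by omega), if_pos (show k + 1 ≤ k + j + 1 by omega)] at h
      linarith
    have H2 : ∀ j, j + 1 < n - k →
        pU (j + 1) * pV j = padded V'' j * padded U'' j := by
      intro j hj
      have h := h2 (k + j - 1) (by omega)
      simp only [show k + j - 1 + 1 = k + j from by omega,
        show k + j + 1 - k = j + 1 from by omega,
        show k + j - k = j from by omega,
        show k + j + 1 - (k + 1) = j from by omega,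
        if_pos (show k ≤ k + j + 1 by omega), if_pos (show k ≤ k + j by omega),
        if_pos (show k + 1 ≤ k + j + 1 by omega), neg_mul_neg] at h
      linarith
    have key : ∀ j, j < n - k →
        padded U'' j = useq pU pV j ∧
          (j + 1 < n - k → padded V'' j = vseq pU pV j) := by
      intro j
      induction j with
      | zero =>
        intro hj
        have hu0 : padded U'' 0 = useq pU pV 0 := by rw [useq_zero, ← H10]
        refine ⟨hu0, fun hj1 => ?_⟩
        have h2' := H2 0 (by omega)
        rw [hu0] at h2'
        rw [vseq, eq_div_iff (ne_of_gt (useq_pos pU pV (n - k) hpU hpV 0 (by omega)))]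
        linarith
      | succ j ih =>
        intro hj
        obtain ⟨hu, hv⟩ := ih (by omega)
        have hvj := hv hj
        have hu1 : padded U'' (j + 1) = useq pU pV (j + 1) := by
          have hh := H1 j hj
          rw [hvj] at hh
          rw [useq_succ]
          linarith
        refine ⟨hu1, fun hj2 => ?_⟩
        have h2' := H2 (j + 1) (by omega)
        rw [hu1] at h2'
        rw [vseq, eq_div_iff (ne_of_gt (useq_pos pU pV (n - k) hpU hpV (j + 1) (by omega)))]
        linarith
    constructor
    · funext i
      have hi := i.isLt
      have hk2 := (key (i : ℕ) (by omega)).2 (by omega)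
      rw [← padded_coe V'' i]
      exact hk2
    · funext i
      have hi := i.isLt
      rw [← padded_coe U'' i]
      exact (key (i : ℕ) hi).1
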